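/- (Achievability of the lower bound in Theorem 1.) Let σ > 0 and consider the Gaussian pupil code a(t) = exp(−t²/(2σ²)), with focal length f > 0, groove density ν₀ > 0, and wavelength λ > 0. Then the space-spectrum bandwidth product attains the lower bound with equality: σ_x · σ_λ = λ/(4π ν₀). -/

import Mathlib

open MeasureTheory Real
open scoped FourierTransform

/-- The spread of a nonnegative weight `g : ℝ → ℝ`:
`σ(g) = sqrt((∫ t² g(t) dt)/(∫ g(t) dt))`. -/
noncomputable def spread (g : ℝ → ℝ) : ℝ :=
  Real.sqrt ((∫ t, t ^ 2 * g t) / (∫ t, g t))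

lemma integral_sq_gaussian {b : ℝ} (hb : 0 < b) :
    ∫ x : ℝ, x ^ 2 * Real.exp (-b * x ^ 2) = Real.sqrt (π / b) / (2 * b) := by
  have h1 : ∫ x : ℝ, x ^ 2 * Real.exp (-b * x ^ 2)
      = ∫ x : ℝ, |x| ^ 2 * Real.exp (-b * |x| ^ 2) := by
    congr 1; ext x; rw [sq_abs]
  rw [h1, integral_comp_abs (f := fun x => x ^ 2 * Real.exp (-b * x ^ 2))]
  have h2 : ∫ x in Set.Ioi (0:ℝ), x ^ 2 * Real.exp (-b * x ^ 2)
      = ∫ x in Set.Ioi (0:ℝ), x ^ (2:ℝ) * Real.exp (-b * x ^ (2:ℝ)) := by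
    refine setIntegral_congr_fun measurableSet_Ioi (fun x hx => ?_)
    rw [← Real.rpow_natCast x 2]; norm_num
  rw [h2, integral_rpow_mul_exp_neg_mul_rpow (by norm_num) (by norm_num) hb]
  have hG : Real.Gamma ((2 + 1) / 2) = Real.sqrt π / 2 := by
    have : ((2:ℝ) + 1) / 2 = 1/2 + 1 := by norm_num
    rw [this, Real.Gamma_add_one (by norm_num), Real.Gamma_one_half_eq]
    ring
  rw [hG]
  have hb2 : b ^ (-(2 + 1) / 2 : ℝ) = (Real.sqrt b)⁻¹ * b⁻¹ := by
    rw [show (-(2 + 1) / 2 : ℝ) = -(1/2) + -1 by norm_num, Real.rpow_add hb,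
      Real.rpow_neg_one, Real.rpow_neg hb.le, ← Real.sqrt_eq_rpow]
  rw [hb2, Real.sqrt_div Real.pi_pos.le]
  have h3 : Real.sqrt b ≠ 0 := by positivity
  field_simp

lemma spread_gaussian {A c : ℝ} (hA : 0 < A) (hc : 0 < c) :
    spread (fun x => A * Real.exp (-c * x ^ 2)) = Real.sqrt (1 / (2 * c)) := by
  unfold spread
  have h1 : ∫ x : ℝ, x ^ 2 * (A * Real.exp (-c * x ^ 2))
      = A * (Real.sqrt (π / c) / (2 * c)) := by
    simp_rw [mul_left_comm]
    rw [integral_const_mul, integral_sq_gaussian hc]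
  have h2 : ∫ x : ℝ, A * Real.exp (-c * x ^ 2) = A * Real.sqrt (π / c) := by
    rw [integral_const_mul, integral_gaussian]
  rw [h1, h2]
  have hs : Real.sqrt (π / c) ≠ 0 := by positivity
  congr 1
  field_simp

/-- Achievability of the lower bound in Theorem 1: for the Gaussian pupil code
`a(t) = exp(−t²/(2σ²))`, the space-spectrum bandwidth product attains the bound
with equality: `σ_x · σ_λ = λ/(4π ν₀)`. -/
theorem gaussian_achieves_lower_bound (σ f ν₀ lam : ℝ) (hσ : 0 < σ) (hf : 0 < f)
    (hν : 0 < ν₀) (hlam : 0 < lam) :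
    spread (fun x => ‖𝓕 (fun t : ℝ => Complex.exp (-(t : ℂ) ^ 2 / (2 * (σ : ℂ) ^ 2)))
        (-(x / (lam * f)))‖ ^ 2) *
      spread (fun μ => ‖(fun t : ℝ => Complex.exp (-(t : ℂ) ^ 2 / (2 * (σ : ℂ) ^ 2)))
        (-(μ * f * ν₀))‖ ^ 2) = lam / (4 * π * ν₀) := by
  have hπ := Real.pi_pos
  have hσ' : σ ≠ 0 := hσ.ne'
  set r : ℝ := 1 / (2 * π * σ ^ 2) with hr
  have hrpos : 0 < r := by positivity
  -- rewrite the Fourier transform of the Gaussian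
  have hfun : (fun t : ℝ => Complex.exp (-(t : ℂ) ^ 2 / (2 * (σ : ℂ) ^ 2)))
      = fun t : ℝ => Complex.exp (-(π : ℂ) * (r : ℝ) * (t : ℂ) ^ 2) := by
    funext t
    congr 1
    have hσc : ((σ : ℂ)) ≠ 0 := Complex.ofReal_ne_zero.mpr hσ'
    have hπc : ((π : ℂ)) ≠ 0 := Complex.ofReal_ne_zero.mpr Real.pi_ne_zero
    rw [hr]
    push_cast
    field_simp
  have hFT : (𝓕 fun t : ℝ => Complex.exp (-(t : ℂ) ^ 2 / (2 * (σ : ℂ) ^ 2)))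
      = fun ξ : ℝ => 1 / ((r : ℂ)) ^ (1 / 2 : ℂ) *
        Complex.exp (-(π : ℂ) / (r : ℂ) * (ξ : ℂ) ^ 2) := by
    rw [hfun]
    exact fourier_gaussian_pi (by simpa using hrpos)
  -- the spatial blur is a Gaussian
  have hx : (fun x => ‖𝓕 (fun t : ℝ => Complex.exp (-(t : ℂ) ^ 2 / (2 * (σ : ℂ) ^ 2)))
        (-(x / (lam * f)))‖ ^ 2)
      = fun x => (2 * π * σ ^ 2) * Real.exp (-(4 * π ^ 2 * σ ^ 2 / (lam * f) ^ 2) * x ^ 2) := by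
    funext x
    rw [hFT]
    beta_reduce
    have h1 : ((r : ℂ)) ^ (1 / 2 : ℂ) = ((r ^ (1 / 2 : ℝ) : ℝ) : ℂ) := by
      rw [Complex.ofReal_cpow hrpos.le]
      norm_num
    have h2 : (-(π : ℂ) / (r : ℂ) * ((-(x / (lam * f)) : ℝ) : ℂ) ^ 2)
        = ((-π / r * (x / (lam * f)) ^ 2 : ℝ) : ℂ) := by
      push_cast
      ring
    rw [h1, h2, norm_mul, Complex.norm_exp,
      Complex.ofReal_re]
    have h3 : ‖1 / ((r ^ (1 / 2 : ℝ) : ℝ) : ℂ)‖ = (r ^ (1 / 2 : ℝ))⁻¹ := by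
      rw [norm_div, norm_one, Complex.norm_real, Real.norm_eq_abs,
        abs_of_pos (by positivity), one_div]
    rw [h3, mul_pow, ← Real.exp_nat_mul]
    have h4 : ((r ^ (1 / 2 : ℝ))⁻¹) ^ 2 = r⁻¹ := by
      rw [← Real.sqrt_eq_rpow, inv_pow, Real.sq_sqrt hrpos.le]
    have hri : r⁻¹ = 2 * π * σ ^ 2 := by
      rw [hr]; field_simp
    rw [h4, hri]
    congr 1
    rw [hr]
    have hlf : lam * f ≠ 0 := by positivity
    field_simp
    ring
  -- the spectral blur is a Gaussian
  have hμ : (fun μ => ‖(fun t : ℝ => Complex.exp (-(t : ℂ) ^ 2 / (2 * (σ : ℂ) ^ 2)))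
        (-(μ * f * ν₀))‖ ^ 2)
      = fun μ => (1 : ℝ) * Real.exp (-((f * ν₀) ^ 2 / σ ^ 2) * μ ^ 2) := by
    funext μ
    have h2 : (-(((-(μ * f * ν₀)) : ℝ) : ℂ) ^ 2 / (2 * (σ : ℂ) ^ 2))
        = ((-(μ * f * ν₀) ^ 2 / (2 * σ ^ 2) : ℝ) : ℂ) := by
      push_cast; ring
    simp only [h2]
    rw [Complex.norm_exp, Complex.ofReal_re, ← Real.exp_nat_mul,
      one_mul]
    congr 1
    field_simp
    ring
  rw [hx, hμ, spread_gaussian (by positivity) (by positivity),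
    spread_gaussian (by norm_num) (by positivity),
    ← Real.sqrt_mul (by positivity)]
  have : 1 / (2 * (4 * π ^ 2 * σ ^ 2 / (lam * f) ^ 2)) * (1 / (2 * ((f * ν₀) ^ 2 / σ ^ 2)))
      = (lam / (4 * π * ν₀)) ^ 2 := by
    field_simp
    ring
  rw [this, Real.sqrt_sq (by positivity)]
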